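/- arXiv:2011.09433 — 6 statements merged into one kernel-verified Lean document; each statement's English description precedes it below -/
import Mathlib

section
/- For all real numbers λ and m and all complex numbers a and b, set z := (λ−m−a)(λ+m−b). Then |z| + Re z ≥ 2(λ−m−Re a)(λ+m−Re b) and |z| + Re z ≤ ½((Im a − Im b)² + (2λ − Re a − Re b)²). -/
/-! Both bounds hold for an arbitrary product `u * v` with `Re (u * v) = Re u Re v - Im u Im v`:
the lower one because `‖u v‖ = ‖u v̄‖ ≥ Re (u v̄) = Re u Re v + Im u Im v`, the upper one because
`‖u v‖ = ‖u‖ ‖v‖ ≤ (‖u‖² + ‖v‖²) / 2`. -/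

namespace Complex

theorem two_mul_re_mul_re_le_norm_mul_add_re_mul (u v : ℂ) :
    2 * (u.re * v.re) ≤ ‖u * v‖ + (u * v).re := by
  have h := re_le_norm (u * starRingEnd ℂ v)
  rw [norm_mul, norm_conj, ← norm_mul] at h
  simp only [mul_re, conj_re, conj_im] at h ⊢
  linarith

theorem norm_mul_add_re_mul_le (u v : ℂ) :
    ‖u * v‖ + (u * v).re ≤ ((u.re + v.re) ^ 2 + (u.im - v.im) ^ 2) / 2 := by
  have h := two_mul_le_add_sq ‖u‖ ‖v‖
  rw [Complex.sq_norm, Complex.sq_norm, normSq_apply, normSq_apply] at h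
  rw [norm_mul, mul_re]
  nlinarith

end Complex

/-- For real `λ, m` and complex `a, b`, with
`z := (λ−m−a)(λ+m−b)`, one has `|z| + Re z ≥ 2(λ−m−Re a)(λ+m−Re b)` and
`|z| + Re z ≤ ½((Im a − Im b)² + (2λ − Re a − Re b)²)`. -/
theorem statement5 (lam m : ℝ) (a b : ℂ) :
    2 * ((lam - m - a.re) * (lam + m - b.re)) ≤
        ‖((lam : ℂ) - (m : ℂ) - a) * ((lam : ℂ) + (m : ℂ) - b)‖ +
          ((((lam : ℂ) - (m : ℂ) - a) * ((lam : ℂ) + (m : ℂ) - b))).re ∧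
      ‖((lam : ℂ) - (m : ℂ) - a) * ((lam : ℂ) + (m : ℂ) - b)‖ +
          ((((lam : ℂ) - (m : ℂ) - a) * ((lam : ℂ) + (m : ℂ) - b))).re ≤
        (1 / 2) * ((a.im - b.im) ^ 2 + (2 * lam - a.re - b.re) ^ 2) := by
  set u : ℂ := (lam : ℂ) - (m : ℂ) - a with hu
  set v : ℂ := (lam : ℂ) + (m : ℂ) - b with hv
  have hlower := Complex.two_mul_re_mul_re_le_norm_mul_add_re_mul u v
  have hupper := Complex.norm_mul_add_re_mul_le u v
  simp only [hu, hv, Complex.sub_re, Complex.add_re, Complex.ofReal_re, Complex.sub_im,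
    Complex.add_im, Complex.ofReal_im] at hlower hupper
  exact ⟨hlower, by linarith⟩
end

section
/- Let m ≥ 0 and let V : ℝ → ℂ^{2×2} have continuously differentiable entries V₁₁, V₁₂, V₂₁, V₂₂. Let V* : ℝ → ℂ^{2×2} be the pointwise adjoint (conjugate transpose), i.e. (V*)₁₁ = conj V₁₁, (V*)₁₂ = conj V₂₁, (V*)₂₁ = conj V₁₂, (V*)₂₂ = conj V₂₂. Then the two matrix identities [V*(x)−V(x), σ₁] = 0 and [V(x), V*(x)] − i σ₁ (V*−V)′(x) + m[σ₃, V*(x)−V(x)] = 0 hold for every x ∈ ℝ (equivalently, the formal commutator H_V H_{V*} − H_{V*} H_V vanishes as a differential expression) if and only if one of the following two sets of conditions holds on all of ℝ: (a) Im V₁₁ = Im V₂₂ is a constant function, Re V₁₂ = Re V₂₁, and Im V₁₂ + Im V₂₁ = 0; or (b) Im V₁₁ = Im V₂₂ is a constant function, Re V₁₂ = Re V₂₁, Im V₁₂ = Im V₂₁ is a nonzero constant function, and Re V₂₂ − Re V₁₁ − 2m = 0. -/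
/-!
Entrywise, `[V* − V, σ₁] = 0` says `Im V₁₁ = Im V₂₂` and `Re V₁₂ = Re V₂₁`. Given these, the
second identity amounts to: `Im V₁₁` and `Im V₂₂` have zero derivative, `Re V₁₂' = Re V₂₁'`,
`s := Im V₁₂ + Im V₂₁` has zero derivative, `(Im V₁₂)² = (Im V₂₁)²` and
`s · (Re V₂₂ − Re V₁₁ − 2m) = 0`. So `s` is a constant: either `s = 0`, which is (a), or `s ≠ 0`,
and then `(Im V₁₂ − Im V₂₁) s = 0` forces `Im V₁₂ = Im V₂₁ = s / 2` and `Re V₂₂ − Re V₁₁ = 2m`,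
which is (b).
-/

open Matrix

/-- The Pauli matrix `σ₁`. -/
noncomputable def sigma1 : Matrix (Fin 2) (Fin 2) ℂ := !![0, 1; 1, 0]

/-- The Pauli matrix `σ₃`. -/
noncomputable def sigma3 : Matrix (Fin 2) (Fin 2) ℂ := !![1, 0; 0, -1]

/-- The matrix potential `V(x)`. -/
noncomputable def Vmat (V11 V12 V21 V22 : ℝ → ℂ) (x : ℝ) : Matrix (Fin 2) (Fin 2) ℂ :=
  !![V11 x, V12 x; V21 x, V22 x]

/-- The pointwise adjoint `V*(x)` (conjugate transpose). -/
noncomputable def VmatStar (V11 V12 V21 V22 : ℝ → ℂ) (x : ℝ) :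
    Matrix (Fin 2) (Fin 2) ℂ :=
  !![starRingEnd ℂ (V11 x), starRingEnd ℂ (V21 x);
     starRingEnd ℂ (V12 x), starRingEnd ℂ (V22 x)]

/-- The entrywise derivative `(V* − V)′(x)`. -/
noncomputable def VstarVderiv (V11 V12 V21 V22 : ℝ → ℂ) (x : ℝ) :
    Matrix (Fin 2) (Fin 2) ℂ :=
  !![deriv (fun t => starRingEnd ℂ (V11 t) - V11 t) x,
       deriv (fun t => starRingEnd ℂ (V21 t) - V12 t) x;
     deriv (fun t => starRingEnd ℂ (V12 t) - V21 t) x,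
       deriv (fun t => starRingEnd ℂ (V22 t) - V22 t) x]

open ComplexConjugate

theorem HasDerivAt.complex_re {f : ℝ → ℂ} {f' : ℂ} {x : ℝ} (hf : HasDerivAt f f' x) :
    HasDerivAt (fun t => (f t).re) f'.re x :=
  Complex.reCLM.hasFDerivAt.comp_hasDerivAt x hf

theorem HasDerivAt.complex_im {f : ℝ → ℂ} {f' : ℂ} {x : ℝ} (hf : HasDerivAt f f' x) :
    HasDerivAt (fun t => (f t).im) f'.im x :=
  Complex.imCLM.hasFDerivAt.comp_hasDerivAt x hf

section ConstantFunctions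

variable {𝕜 G : Type*} [RCLike 𝕜] [NormedAddCommGroup G] [NormedSpace 𝕜 G]
  {f g f' g' : 𝕜 → G}

theorem exists_forall_eq_iff_of_hasDerivAt (hf : ∀ x, HasDerivAt f (f' x) x) :
    (∃ c, ∀ x, f x = c) ↔ ∀ x, f' x = 0 := by
  constructor
  · rintro ⟨c, hc⟩ x
    rw [show f = fun _ => c from funext hc] at hf
    exact (hf x).unique (hasDerivAt_const x c)
  · intro hf'
    refine ⟨f 0, fun x => is_const_of_deriv_eq_zero (fun y => (hf y).differentiableAt)
      (fun y => ?_) x 0⟩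
    rw [(hf y).deriv, hf']

theorem forall_eq_and_hasDerivAt_eq_iff (hf : ∀ x, HasDerivAt f (f' x) x)
    (hg : ∀ x, HasDerivAt g (g' x) x) :
    (∀ x, f x = g x ∧ f' x = g' x) ↔ ∀ x, f x = g x := by
  refine ⟨fun h x => (h x).1, fun h x => ⟨h x, ?_⟩⟩
  rw [show f = g from funext h] at hf
  exact (hf x).unique (hg x)

theorem exists_forall_eq_and_eq_iff_of_hasDerivAt (hf : ∀ x, HasDerivAt f (f' x) x)
    (hg : ∀ x, HasDerivAt g (g' x) x) :
    (∀ x, f x = g x ∧ f' x = 0 ∧ g' x = 0) ↔ ∃ c, ∀ x, f x = c ∧ g x = c := by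
  constructor
  · intro h
    obtain ⟨c, hc⟩ := (exists_forall_eq_iff_of_hasDerivAt hf).2 fun x => (h x).2.1
    exact ⟨c, fun x => ⟨hc x, (h x).1 ▸ hc x⟩⟩
  · rintro ⟨c, hc⟩ x
    refine ⟨(hc x).1.trans (hc x).2.symm, ?_, ?_⟩
    · exact (exists_forall_eq_iff_of_hasDerivAt hf).1 ⟨c, fun y => (hc y).1⟩ x
    · exact (exists_forall_eq_iff_of_hasDerivAt hg).1 ⟨c, fun y => (hc y).2⟩ x

end ConstantFunctions

theorem forall_sq_eq_sq_and_mul_eq_zero_iff {u v u' v' e : ℝ → ℝ}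
    (hu : ∀ x, HasDerivAt u (u' x) x) (hv : ∀ x, HasDerivAt v (v' x) x) :
    (∀ x, u' x + v' x = 0 ∧ u x ^ 2 = v x ^ 2 ∧ (u x + v x) * e x = 0) ↔
      (∀ x, u x + v x = 0) ∨ (∃ k, k ≠ 0 ∧ ∀ x, u x = k ∧ v x = k) ∧ ∀ x, e x = 0 := by
  have hsum : (∃ s, ∀ x, u x + v x = s) ↔ ∀ x, u' x + v' x = 0 :=
    exists_forall_eq_iff_of_hasDerivAt fun x => (hu x).add (hv x)
  constructor
  · intro h
    obtain ⟨s, hs⟩ := hsum.2 fun x => (h x).1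
    by_cases hs0 : s = 0
    · exact Or.inl fun x => (hs x).trans hs0
    have hsx : ∀ x, u x + v x ≠ 0 := fun x => (hs x).symm ▸ hs0
    refine Or.inr ⟨⟨s / 2, div_ne_zero hs0 two_ne_zero, fun x => ?_⟩, fun x => ?_⟩
    · have hdiff : (u x - v x) * (u x + v x) = 0 := by linear_combination (h x).2.1
      have huv := (mul_eq_zero.1 hdiff).resolve_right (hsx x)
      constructor <;> linarith [hs x, huv]
    · exact (mul_eq_zero.1 (h x).2.2).resolve_left (hsx x)
  · rintro (h | ⟨⟨k, -, hk⟩, he⟩) x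
    · refine ⟨hsum.1 ⟨0, h⟩ x, ?_, by rw [h x, zero_mul]⟩
      linear_combination (u x - v x) * h x
    · refine ⟨?_, by rw [(hk x).1, (hk x).2], by rw [he x, mul_zero]⟩
      rw [(exists_forall_eq_iff_of_hasDerivAt hu).1 ⟨k, fun y => (hk y).1⟩ x,
        (exists_forall_eq_iff_of_hasDerivAt hv).1 ⟨k, fun y => (hk y).2⟩ x, add_zero]

theorem VstarVderiv_eq {V11 V12 V21 V22 : ℝ → ℂ} {x : ℝ} (h11 : DifferentiableAt ℝ V11 x)
    (h12 : DifferentiableAt ℝ V12 x) (h21 : DifferentiableAt ℝ V21 x)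
    (h22 : DifferentiableAt ℝ V22 x) :
    VstarVderiv V11 V12 V21 V22 x =
      !![conj (deriv V11 x) - deriv V11 x, conj (deriv V21 x) - deriv V12 x;
        conj (deriv V12 x) - deriv V21 x, conj (deriv V22 x) - deriv V22 x] := by
  simp only [VstarVderiv, starRingEnd_apply]
  rw [deriv_fun_sub h11.star h11, deriv_fun_sub h21.star h12, deriv_fun_sub h12.star h21,
    deriv_fun_sub h22.star h22, deriv.star, deriv.star, deriv.star, deriv.star]

theorem commutator_coeffs_eq_zero_iff (m : ℝ) {V11 V12 V21 V22 : ℝ → ℂ} {x : ℝ}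
    (h11 : DifferentiableAt ℝ V11 x) (h12 : DifferentiableAt ℝ V12 x)
    (h21 : DifferentiableAt ℝ V21 x) (h22 : DifferentiableAt ℝ V22 x) :
    ((VmatStar V11 V12 V21 V22 x - Vmat V11 V12 V21 V22 x) * sigma1 -
          sigma1 * (VmatStar V11 V12 V21 V22 x - Vmat V11 V12 V21 V22 x) = 0 ∧
      Vmat V11 V12 V21 V22 x * VmatStar V11 V12 V21 V22 x -
          VmatStar V11 V12 V21 V22 x * Vmat V11 V12 V21 V22 x -
          Complex.I • (sigma1 * VstarVderiv V11 V12 V21 V22 x) +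
          (m : ℂ) • (sigma3 * (VmatStar V11 V12 V21 V22 x - Vmat V11 V12 V21 V22 x) -
            (VmatStar V11 V12 V21 V22 x - Vmat V11 V12 V21 V22 x) * sigma3) = 0) ↔
    ((V11 x).im = (V22 x).im ∧ (deriv V11 x).im = 0 ∧ (deriv V22 x).im = 0) ∧
      ((V12 x).re = (V21 x).re ∧ (deriv V12 x).re = (deriv V21 x).re) ∧
      ((deriv V12 x).im + (deriv V21 x).im = 0 ∧ (V12 x).im ^ 2 = (V21 x).im ^ 2 ∧
        ((V12 x).im + (V21 x).im) * ((V22 x).re - (V11 x).re - 2 * m) = 0) := by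
  rw [VstarVderiv_eq h11 h12 h21 h22]
  simp only [← Matrix.ext_iff, Fin.forall_fin_two, Vmat, VmatStar, sigma1, sigma3,
    Matrix.add_apply, Matrix.sub_apply, Matrix.smul_apply, Matrix.mul_apply, Fin.sum_univ_two,
    Matrix.of_apply, Matrix.cons_val_zero, Matrix.cons_val_one, Matrix.zero_apply, smul_eq_mul,
    Complex.ext_iff, Complex.add_re, Complex.add_im, Complex.sub_re, Complex.sub_im,
    Complex.mul_re, Complex.mul_im, Complex.conj_re, Complex.conj_im, Complex.I_re, Complex.I_im,
    Complex.ofReal_re, Complex.ofReal_im, Complex.zero_re, Complex.zero_im, Complex.one_re,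
    Complex.one_im, Complex.neg_re, Complex.neg_im]
  grind

theorem statement6_general (m : ℝ) (V11 V12 V21 V22 : ℝ → ℂ)
    (h11 : ContDiff ℝ 1 V11) (h12 : ContDiff ℝ 1 V12)
    (h21 : ContDiff ℝ 1 V21) (h22 : ContDiff ℝ 1 V22) :
    (∀ x : ℝ,
      (VmatStar V11 V12 V21 V22 x - Vmat V11 V12 V21 V22 x) * sigma1 -
          sigma1 * (VmatStar V11 V12 V21 V22 x - Vmat V11 V12 V21 V22 x) = 0 ∧
      Vmat V11 V12 V21 V22 x * VmatStar V11 V12 V21 V22 x -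
          VmatStar V11 V12 V21 V22 x * Vmat V11 V12 V21 V22 x -
          Complex.I • (sigma1 * VstarVderiv V11 V12 V21 V22 x) +
          (m : ℂ) • (sigma3 * (VmatStar V11 V12 V21 V22 x - Vmat V11 V12 V21 V22 x) -
            (VmatStar V11 V12 V21 V22 x - Vmat V11 V12 V21 V22 x) * sigma3) = 0) ↔
    (((∃ cst : ℝ, ∀ x : ℝ, (V11 x).im = cst ∧ (V22 x).im = cst) ∧
        (∀ x : ℝ, (V12 x).re = (V21 x).re) ∧
        (∀ x : ℝ, (V12 x).im + (V21 x).im = 0)) ∨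
      ((∃ cst : ℝ, ∀ x : ℝ, (V11 x).im = cst ∧ (V22 x).im = cst) ∧
        (∀ x : ℝ, (V12 x).re = (V21 x).re) ∧
        (∃ k : ℝ, k ≠ 0 ∧ ∀ x : ℝ, (V12 x).im = k ∧ (V21 x).im = k) ∧
        (∀ x : ℝ, (V22 x).re - (V11 x).re - 2 * m = 0))) := by
  have hd11 := h11.differentiable one_ne_zero
  have hd12 := h12.differentiable one_ne_zero
  have hd21 := h21.differentiable one_ne_zero
  have hd22 := h22.differentiable one_ne_zero
  simp only [← and_or_left]
  refine (forall_congr' fun x =>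
    commutator_coeffs_eq_zero_iff m (hd11 x) (hd12 x) (hd21 x) (hd22 x)).trans ?_
  refine forall_and.trans (and_congr ?_ (forall_and.trans (and_congr ?_ ?_)))
  · exact exists_forall_eq_and_eq_iff_of_hasDerivAt (fun x => (hd11 x).hasDerivAt.complex_im)
      (fun x => (hd22 x).hasDerivAt.complex_im)
  · exact forall_eq_and_hasDerivAt_eq_iff (fun x => (hd12 x).hasDerivAt.complex_re)
      (fun x => (hd21 x).hasDerivAt.complex_re)
  · exact forall_sq_eq_sq_and_mul_eq_zero_iff (fun x => (hd12 x).hasDerivAt.complex_im)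
      (fun x => (hd21 x).hasDerivAt.complex_im)

/-- Criterion for the (formal) normality of the Dirac operator `H_V`:
the identities `[V*−V, σ₁] = 0` and `[V,V*] − iσ₁(V*−V)′ + m[σ₃, V*−V] = 0` hold
everywhere iff the potential satisfies one of the two sets of conditions (a), (b). -/
theorem statement6 (m : ℝ) (hm : 0 ≤ m) (V11 V12 V21 V22 : ℝ → ℂ)
    (h11 : ContDiff ℝ 1 V11) (h12 : ContDiff ℝ 1 V12)
    (h21 : ContDiff ℝ 1 V21) (h22 : ContDiff ℝ 1 V22) :
    (∀ x : ℝ,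
      (VmatStar V11 V12 V21 V22 x - Vmat V11 V12 V21 V22 x) * sigma1 -
          sigma1 * (VmatStar V11 V12 V21 V22 x - Vmat V11 V12 V21 V22 x) = 0 ∧
      Vmat V11 V12 V21 V22 x * VmatStar V11 V12 V21 V22 x -
          VmatStar V11 V12 V21 V22 x * Vmat V11 V12 V21 V22 x -
          Complex.I • (sigma1 * VstarVderiv V11 V12 V21 V22 x) +
          (m : ℂ) • (sigma3 * (VmatStar V11 V12 V21 V22 x - Vmat V11 V12 V21 V22 x) -
            (VmatStar V11 V12 V21 V22 x - Vmat V11 V12 V21 V22 x) * sigma3) = 0) ↔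
    (((∃ cst : ℝ, ∀ x : ℝ, (V11 x).im = cst ∧ (V22 x).im = cst) ∧
        (∀ x : ℝ, (V12 x).re = (V21 x).re) ∧
        (∀ x : ℝ, (V12 x).im + (V21 x).im = 0)) ∨
      ((∃ cst : ℝ, ∀ x : ℝ, (V11 x).im = cst ∧ (V22 x).im = cst) ∧
        (∀ x : ℝ, (V12 x).re = (V21 x).re) ∧
        (∃ k : ℝ, k ≠ 0 ∧ ∀ x : ℝ, (V12 x).im = k ∧ (V21 x).im = k) ∧
        (∀ x : ℝ, (V22 x).re - (V11 x).re - 2 * m = 0))) :=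
  statement6_general m V11 V12 V21 V22 h11 h12 h21 h22
end

section
/- Let ν ≥ −1 and M > 0, and let 𝒱 : (0,∞) → ℝ be twice differentiable with 𝒱′(t) > 0 and |𝒱″(t)| ≤ M t^ν 𝒱′(t) for all t > 0. Then there exists a constant C ≥ 1, depending only on M and ν, such that for every x > 0 with x^{1+ν} ≥ 1 and every real h with |h| ≤ x^{−ν}/2, one has C⁻¹ 𝒱′(x) ≤ 𝒱′(x+h) ≤ C 𝒱′(x). -/
/-! On the interval `[x/2, 3x/2]` the hypothesis bounds the logarithmic derivative of `𝒱′`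
by `M t^ν ≤ K M x^ν` with `K = (1/2)^ν + (3/2)^ν`, so by the mean value inequality
`log 𝒱′` moves by at most `K M x^ν |h| ≤ K M / 2` between `x` and `x + h`. Hence
`C = exp (K M / 2)` works. -/

open Real Set

theorem le_exp_mul_abs_sub_mul_of_abs_deriv_le {f f' : ℝ → ℝ} {s : Set ℝ} {L : ℝ}
    (hs : Convex ℝ s) (hf : ∀ t ∈ s, HasDerivWithinAt f (f' t) s t)
    (hpos : ∀ t ∈ s, 0 < f t) (hbound : ∀ t ∈ s, |f' t| ≤ L * f t)
    {a b : ℝ} (ha : a ∈ s) (hb : b ∈ s) :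
    f a ≤ exp (L * |b - a|) * f b ∧ f b ≤ exp (L * |b - a|) * f a := by
  have hlog : ∀ t ∈ s, HasDerivWithinAt (fun t => log (f t)) (f' t / f t) s t :=
    fun t ht => (hf t ht).log (hpos t ht).ne'
  have hlog_bound : ∀ t ∈ s, ‖f' t / f t‖ ≤ L := fun t ht => by
    rw [norm_eq_abs, abs_div, abs_of_pos (hpos t ht), div_le_iff₀ (hpos t ht)]
    exact hbound t ht
  suffices key : ∀ a ∈ s, ∀ b ∈ s, f b ≤ exp (L * |b - a|) * f a from
    ⟨abs_sub_comm a b ▸ key b hb a ha, key a ha b hb⟩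
  intro a ha b hb
  have hlog_lip := hs.norm_image_sub_le_of_norm_hasDerivWithin_le hlog hlog_bound ha hb
  rw [norm_eq_abs, norm_eq_abs] at hlog_lip
  calc f b = exp (log (f b)) := (exp_log (hpos b hb)).symm
    _ ≤ exp (L * |b - a| + log (f a)) :=
        exp_le_exp.mpr (by linarith [le_abs_self (log (f b) - log (f a))])
    _ = exp (L * |b - a|) * f a := by rw [exp_add, exp_log (hpos a ha)]

theorem rpow_le_mul_rpow_of_mem_Icc {a b x t : ℝ} (ν : ℝ) (ha : 0 < a) (hx : 0 < x)
    (ht : t ∈ Icc (a * x) (b * x)) :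
    t ^ ν ≤ (a ^ ν + b ^ ν) * x ^ ν := by
  have hta : a ≤ t / x := (le_div_iff₀ hx).mpr ht.1
  have htb : t / x ≤ b := (div_le_iff₀ hx).mpr ht.2
  have hratio : (t / x) ^ ν ≤ a ^ ν + b ^ ν := by
    rcases le_total 0 ν with hν | hν
    · linarith [rpow_le_rpow (ha.le.trans hta) htb hν, rpow_nonneg ha.le ν]
    · linarith [rpow_le_rpow_of_nonpos ha hta hν, rpow_nonneg (ha.le.trans (hta.trans htb)) ν]
  calc t ^ ν = (t / x) ^ ν * x ^ ν := by
        rw [← mul_rpow (ha.le.trans hta) hx.le, div_mul_cancel₀ t hx.ne']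
    _ ≤ (a ^ ν + b ^ ν) * x ^ ν := by gcongr

theorem add_mem_Icc_of_abs_le_rpow_neg {x ν h : ℝ} (hx : 0 < x) (hx1 : 1 ≤ x ^ (1 + ν))
    (hh : |h| ≤ x ^ (-ν) / 2) : x + h ∈ Icc (1 / 2 * x) (3 / 2 * x) := by
  have hrpow : x ^ (-ν) ≤ x :=
    calc x ^ (-ν) ≤ x ^ (-ν) * x ^ (1 + ν) := le_mul_of_one_le_right (rpow_nonneg hx.le _) hx1
      _ = x := by rw [← rpow_add hx]; norm_num
  have := abs_le.mp hh
  exact ⟨by linarith, by linarith⟩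

theorem statement7_general (ν M : ℝ) (hM : 0 < M) :
    ∃ C : ℝ, 1 ≤ C ∧
      ∀ V : ℝ → ℝ,
        (∀ t : ℝ, 0 < t → DifferentiableAt ℝ V t) →
        (∀ t : ℝ, 0 < t → DifferentiableAt ℝ (deriv V) t) →
        (∀ t : ℝ, 0 < t → 0 < deriv V t) →
        (∀ t : ℝ, 0 < t → |deriv (deriv V) t| ≤ M * t ^ ν * deriv V t) →
        ∀ x : ℝ, 0 < x → 1 ≤ x ^ (1 + ν) →
          ∀ h : ℝ, |h| ≤ x ^ (-ν) / 2 →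
            C⁻¹ * deriv V x ≤ deriv V (x + h) ∧ deriv V (x + h) ≤ C * deriv V x := by
  set K : ℝ := (1 / 2 : ℝ) ^ ν + (3 / 2 : ℝ) ^ ν
  refine ⟨exp (M * K / 2), one_le_exp (by positivity), ?_⟩
  intro V _ hV' hV'pos hV'' x hx hx1 h hh
  set s := Icc (1 / 2 * x) (3 / 2 * x)
  have hs_pos : ∀ t ∈ s, 0 < t := fun t ht => lt_of_lt_of_le (by positivity) ht.1
  have hx_mem : x ∈ s := ⟨by linarith, by linarith⟩
  have hxh_mem : x + h ∈ s := add_mem_Icc_of_abs_le_rpow_neg hx hx1 hh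
  have hderiv : ∀ t ∈ s, HasDerivWithinAt (deriv V) (deriv (deriv V) t) s t :=
    fun t ht => (hV' t (hs_pos t ht)).hasDerivAt.hasDerivWithinAt
  have hbound : ∀ t ∈ s, |deriv (deriv V) t| ≤ M * K * x ^ ν * deriv V t := fun t ht => by
    have := rpow_le_mul_rpow_of_mem_Icc ν (by norm_num) hx ht
    calc |deriv (deriv V) t| ≤ M * t ^ ν * deriv V t := hV'' t (hs_pos t ht)
      _ ≤ M * K * x ^ ν * deriv V t := by
          have := hV'pos t (hs_pos t ht)
          rw [mul_assoc M K]; gcongr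
  have hexponent : M * K * x ^ ν * |h| ≤ M * K / 2 := by
    calc M * K * x ^ ν * |h| ≤ M * K * x ^ ν * (x ^ (-ν) / 2) := by gcongr
      _ = M * K / 2 := by rw [rpow_neg hx.le]; field_simp
  obtain ⟨hbackward, hforward⟩ := le_exp_mul_abs_sub_mul_of_abs_deriv_le (convex_Icc _ _)
    hderiv (fun t ht => hV'pos t (hs_pos t ht)) hbound hx_mem hxh_mem
  rw [add_sub_cancel_left] at hbackward hforward
  have hexp_le := exp_le_exp.mpr hexponent
  constructor
  · rw [inv_mul_le_iff₀ (exp_pos _)]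
    exact hbackward.trans (by gcongr; exact (hV'pos _ (hs_pos _ hxh_mem)).le)
  · exact hforward.trans (by gcongr; exact (hV'pos x hx).le)

/-- Let `ν ≥ −1` and `M > 0`. There is a constant `C ≥ 1`, depending only
on `M` and `ν`, such that for every `𝒱 : (0,∞) → ℝ`, twice differentiable with `𝒱′ > 0` and
`|𝒱″(t)| ≤ M t^ν 𝒱′(t)` on `(0,∞)`, every `x > 0` with `x^{1+ν} ≥ 1` and every real `h`
with `|h| ≤ x^{−ν}/2`, one has `C⁻¹ 𝒱′(x) ≤ 𝒱′(x+h) ≤ C 𝒱′(x)`. -/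
theorem statement7 (ν M : ℝ) (hν : -1 ≤ ν) (hM : 0 < M) :
    ∃ C : ℝ, 1 ≤ C ∧
      ∀ V : ℝ → ℝ,
        (∀ t : ℝ, 0 < t → DifferentiableAt ℝ V t) →
        (∀ t : ℝ, 0 < t → DifferentiableAt ℝ (deriv V) t) →
        (∀ t : ℝ, 0 < t → 0 < deriv V t) →
        (∀ t : ℝ, 0 < t → |deriv (deriv V) t| ≤ M * t ^ ν * deriv V t) →
        ∀ x : ℝ, 0 < x → 1 ≤ x ^ (1 + ν) →
          ∀ h : ℝ, |h| ≤ x ^ (-ν) / 2 →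
            C⁻¹ * deriv V x ≤ deriv V (x + h) ∧ deriv V (x + h) ≤ C * deriv V x :=
  statement7_general ν M hM
end

section
/- Let ν ≥ −1 and M > 0, and let 𝒱 : (0,∞) → ℝ be twice differentiable with 𝒱′(t) > 0 and |𝒱″(t)| ≤ M t^ν 𝒱′(t) for all t > 0. Then there exist constants c > 0 and C > 0, depending only on M and ν, such that for every x_β > 0 with x_β^{1+ν} ≥ 1 and every x > 0 with |x − x_β| ≤ x_β^{−ν}/2, one has c 𝒱′(x_β)(x−x_β)² ≤ ∫_{x_β}^{x} (𝒱(t)−𝒱(x_β)) dt ≤ C 𝒱′(x_β)(x−x_β)². -/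
/-! On `[x_β/2, 3x_β/2]` one has `t^ν ≤ K x_β^ν` with `K = max((1/2)^ν, (3/2)^ν)`, so `log 𝒱′`
is `M K x_β^ν`-Lipschitz there. Since `|x - x_β| ≤ x_β^{-ν}/2`, this gives
`e^{-A} 𝒱′(x_β) ≤ 𝒱′(t) ≤ e^A 𝒱′(x_β)` between `x_β` and `x`, with `A = M K / 2`.
If `L ≤ F′` between `a` and `b`, then `t ↦ F t - L t` is monotone there, so
`∫_a^b (F t - F a - L (t - a)) dt ≥ 0` on either side of `a`; with `F = 𝒱` this turns the
pointwise bounds on `𝒱′` into the bounds on the integral. -/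

open Set Real intervalIntegral

theorem integral_sub_left_nonneg_of_monotoneOn {g : ℝ → ℝ} {a b : ℝ}
    (hg : MonotoneOn g (uIcc a b)) : 0 ≤ ∫ t in a..b, (g t - g a) := by
  rcases le_total a b with hab | hba
  · refine integral_nonneg hab fun t ht => sub_nonneg.2 <| hg left_mem_uIcc ?_ ht.1
    exact Icc_subset_uIcc ht
  · rw [integral_symm, ← integral_neg]
    refine integral_nonneg hba fun t ht => ?_
    rw [neg_sub, sub_nonneg]
    exact hg (Icc_subset_uIcc' ht) left_mem_uIcc ht.2

theorem mul_sq_div_two_le_integral_sub_of_le_deriv {F F' : ℝ → ℝ} {a b L : ℝ}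
    (hF : ∀ t ∈ uIcc a b, HasDerivAt F (F' t) t) (hL : ∀ t ∈ uIcc a b, L ≤ F' t) :
    L * (b - a) ^ 2 / 2 ≤ ∫ t in a..b, (F t - F a) := by
  have hFcont : ContinuousOn F (uIcc a b) :=
    fun t ht => (hF t ht).continuousAt.continuousWithinAt
  have hmono : MonotoneOn (fun t => F t - L * t) (uIcc a b) := by
    refine monotoneOn_of_hasDerivWithinAt_nonneg (convex_uIcc a b)
      (hFcont.sub (continuousOn_const.mul continuousOn_id))
      (fun t ht =>
        ((hF t (interior_subset ht)).sub ((hasDerivAt_id t).const_mul L)).hasDerivWithinAt)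
      fun t ht => ?_
    simpa using hL t (interior_subset ht)
  have hsplit : (∫ t in a..b, ((F t - L * t) - (F a - L * a)))
      = (∫ t in a..b, (F t - F a)) - L * (b - a) ^ 2 / 2 := by
    have hrw : (fun t => (F t - L * t) - (F a - L * a)) = fun t => (F t - F a) - L * (t - a) :=
      funext fun t => by ring
    have hint : IntervalIntegrable (fun t => F t - F a) MeasureTheory.volume a b :=
      (hFcont.sub continuousOn_const).intervalIntegrable
    have hlin : Continuous fun t => L * (t - a) := by fun_prop
    rw [hrw, integral_sub hint (hlin.intervalIntegrable a b),
      integral_const_mul, integral_comp_sub_right (fun t => t), integral_id]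
    ring
  linarith [integral_sub_left_nonneg_of_monotoneOn hmono]

theorem integral_sub_le_mul_sq_div_two_of_deriv_le {F F' : ℝ → ℝ} {a b U : ℝ}
    (hF : ∀ t ∈ uIcc a b, HasDerivAt F (F' t) t) (hU : ∀ t ∈ uIcc a b, F' t ≤ U) :
    ∫ t in a..b, (F t - F a) ≤ U * (b - a) ^ 2 / 2 := by
  have h := mul_sq_div_two_le_integral_sub_of_le_deriv (F := fun t => -F t) (L := -U)
    (fun t ht => (hF t ht).neg) fun t ht => neg_le_neg (hU t ht)
  have hneg : (∫ t in a..b, (-F t - -F a)) = -∫ t in a..b, (F t - F a) := by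
    rw [← integral_neg]; congr 1; funext t; ring
  linarith

theorem exp_neg_mul_le_and_le_exp_mul_of_abs_deriv_le {f f' : ℝ → ℝ} {S : Set ℝ}
    {B x y : ℝ} (hS : Convex ℝ S) (hf : ∀ t ∈ S, HasDerivWithinAt f (f' t) S t)
    (hpos : ∀ t ∈ S, 0 < f t) (hbound : ∀ t ∈ S, |f' t| ≤ B * f t) (hx : x ∈ S)
    (hy : y ∈ S) :
    exp (-(B * |y - x|)) * f x ≤ f y ∧ f y ≤ exp (B * |y - x|) * f x := by
  have hlog : |log (f y) - log (f x)| ≤ B * |y - x| := by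
    refine hS.norm_image_sub_le_of_norm_hasDerivWithin_le
      (fun t ht => (hf t ht).log (hpos t ht).ne') (fun t ht => ?_) hx hy
    rw [Real.norm_eq_abs, abs_div, abs_of_pos (hpos t ht), div_le_iff₀ (hpos t ht)]
    exact hbound t ht
  obtain ⟨hlo, hhi⟩ := abs_le.1 hlog
  constructor
  · calc exp (-(B * |y - x|)) * f x = exp (-(B * |y - x|) + log (f x)) := by
          rw [exp_add, exp_log (hpos x hx)]
      _ ≤ exp (log (f y)) := exp_le_exp.2 (by linarith)
      _ = f y := exp_log (hpos y hy)
  · calc f y = exp (log (f y)) := (exp_log (hpos y hy)).symm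
      _ ≤ exp (B * |y - x| + log (f x)) := exp_le_exp.2 (by linarith)
      _ = exp (B * |y - x|) * f x := by rw [exp_add, exp_log (hpos x hx)]

theorem rpow_le_max_mul_rpow {p q a t : ℝ} (ν : ℝ) (hp : 0 < p) (ha : 0 < a)
    (ht : t ∈ Icc (p * a) (q * a)) : t ^ ν ≤ max (p ^ ν) (q ^ ν) * a ^ ν := by
  have hpa : 0 < p * a := mul_pos hp ha
  rcases le_total 0 ν with hν | hν
  · have hq : 0 ≤ q := ((mul_pos_iff_of_pos_right ha).1 (hpa.trans_le (ht.1.trans ht.2))).le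
    calc t ^ ν ≤ (q * a) ^ ν := rpow_le_rpow (hpa.le.trans ht.1) ht.2 hν
      _ = q ^ ν * a ^ ν := mul_rpow hq ha.le
      _ ≤ max (p ^ ν) (q ^ ν) * a ^ ν := by gcongr; exact le_max_right _ _
  · calc t ^ ν ≤ (p * a) ^ ν := rpow_le_rpow_of_nonpos hpa ht.1 hν
      _ = p ^ ν * a ^ ν := mul_rpow hp.le ha.le
      _ ≤ max (p ^ ν) (q ^ ν) * a ^ ν := by gcongr; exact le_max_left _ _

theorem uIcc_subset_Icc_of_abs_sub_le_rpow_neg {ν a x : ℝ} (ha : 0 < a) (h : 1 ≤ a ^ (1 + ν))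
    (hx : |x - a| ≤ a ^ (-ν) / 2) : uIcc a x ⊆ Icc (1 / 2 * a) (3 / 2 * a) := by
  have hpow : a ^ (-ν) ≤ a :=
    calc a ^ (-ν) ≤ a ^ (-ν) * a ^ (1 + ν) := le_mul_of_one_le_right (rpow_nonneg ha.le _) h
      _ = a := by rw [← rpow_add ha]; norm_num
  obtain ⟨hlo, hhi⟩ := abs_le.1 (hx.trans (by linarith) : |x - a| ≤ a / 2)
  exact uIcc_subset_Icc ⟨by linarith, by linarith⟩ ⟨by linarith, by linarith⟩

theorem exp_neg_mul_le_and_le_exp_mul_of_abs_deriv_le_mul_rpow {f f' : ℝ → ℝ}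
    {M K ν a x t : ℝ} (hM : 0 ≤ M) (ha : 0 < a) (hx : |x - a| ≤ a ^ (-ν) / 2)
    (hf : ∀ s ∈ uIcc a x, HasDerivAt f (f' s) s) (hpos : ∀ s ∈ uIcc a x, 0 < f s)
    (hbound : ∀ s ∈ uIcc a x, |f' s| ≤ M * s ^ ν * f s)
    (hK : ∀ s ∈ uIcc a x, s ^ ν ≤ K * a ^ ν) (ht : t ∈ uIcc a x) :
    exp (-(M * K / 2)) * f a ≤ f t ∧ f t ≤ exp (M * K / 2) * f a := by
  have hbound' : ∀ s ∈ uIcc a x, |f' s| ≤ M * K * a ^ ν * f s := fun s hs =>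
    (hbound s hs).trans <|
      calc M * s ^ ν * f s ≤ M * (K * a ^ ν) * f s := by
            gcongr
            · exact (hpos s hs).le
            · exact hK s hs
        _ = M * K * a ^ ν * f s := by ring
  have hexponent : M * K * a ^ ν * |t - a| ≤ M * K / 2 :=
    calc M * K * a ^ ν * |t - a| ≤ M * K * a ^ ν * (a ^ (-ν) / 2) := by
          have : 0 ≤ M * K * a ^ ν :=
            (mul_nonneg_iff_of_pos_right (hpos t ht)).1 ((abs_nonneg _).trans (hbound' t ht))
          gcongr
          exact (abs_sub_left_of_mem_uIcc ht).trans hx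
      _ = M * K / 2 := by rw [rpow_neg ha.le]; field_simp
  obtain ⟨hlo, hhi⟩ := exp_neg_mul_le_and_le_exp_mul_of_abs_deriv_le (convex_uIcc a x)
    (fun s hs => (hf s hs).hasDerivWithinAt) hpos hbound' left_mem_uIcc ht
  have := (hpos a left_mem_uIcc).le
  exact ⟨le_trans (by gcongr) hlo, hhi.trans (by gcongr)⟩

theorem statement8_general (ν M : ℝ) (hM : 0 < M) :
    ∃ c : ℝ, 0 < c ∧ ∃ C : ℝ, 0 < C ∧
      ∀ V : ℝ → ℝ,
        (∀ t : ℝ, 0 < t → DifferentiableAt ℝ V t) →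
        (∀ t : ℝ, 0 < t → DifferentiableAt ℝ (deriv V) t) →
        (∀ t : ℝ, 0 < t → 0 < deriv V t) →
        (∀ t : ℝ, 0 < t → |deriv (deriv V) t| ≤ M * t ^ ν * deriv V t) →
        ∀ xb : ℝ, 0 < xb → 1 ≤ xb ^ (1 + ν) →
          ∀ x : ℝ, 0 < x → |x - xb| ≤ xb ^ (-ν) / 2 →
            c * deriv V xb * (x - xb) ^ 2 ≤ (∫ t in xb..x, (V t - V xb)) ∧
              (∫ t in xb..x, (V t - V xb)) ≤ C * deriv V xb * (x - xb) ^ 2 := by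
  set K := max ((1 / 2 : ℝ) ^ ν) ((3 / 2 : ℝ) ^ ν)
  refine ⟨exp (-(M * K / 2)) / 2, by positivity, exp (M * K / 2) / 2, by positivity, ?_⟩
  intro V hV hV' hV'pos hV'' xb hxb hxb1 x _ hxx
  have hwindow := uIcc_subset_Icc_of_abs_sub_le_rpow_neg hxb hxb1 hxx
  have hpos : ∀ t ∈ uIcc xb x, 0 < t := fun t ht => by linarith [(hwindow ht).1]
  have hV'_comparable := fun t (ht : t ∈ uIcc xb x) =>
    exp_neg_mul_le_and_le_exp_mul_of_abs_deriv_le_mul_rpow hM.le hxb hxx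
      (fun s hs => (hV' s (hpos s hs)).hasDerivAt) (fun s hs => hV'pos s (hpos s hs))
      (fun s hs => hV'' s (hpos s hs))
      (fun s hs => rpow_le_max_mul_rpow ν (by norm_num) hxb (hwindow hs)) ht
  have hderiv : ∀ t ∈ uIcc xb x, HasDerivAt V (deriv V t) t :=
    fun t ht => (hV t (hpos t ht)).hasDerivAt
  have hlower := mul_sq_div_two_le_integral_sub_of_le_deriv hderiv
    fun t ht => (hV'_comparable t ht).1
  have hupper := integral_sub_le_mul_sq_div_two_of_deriv_le hderiv
    fun t ht => (hV'_comparable t ht).2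
  constructor <;> linarith

/-- Let `ν ≥ −1` and `M > 0`. There are constants `c, C > 0`, depending
only on `M` and `ν`, such that for every `𝒱 : (0,∞) → ℝ`, twice differentiable with
`𝒱′ > 0` and `|𝒱″(t)| ≤ M t^ν 𝒱′(t)` on `(0,∞)`, every `x_β > 0` with `x_β^{1+ν} ≥ 1`
and every `x > 0` with `|x − x_β| ≤ x_β^{−ν}/2`, one has
`c 𝒱′(x_β)(x−x_β)² ≤ ∫_{x_β}^{x} (𝒱(t)−𝒱(x_β)) dt ≤ C 𝒱′(x_β)(x−x_β)²`. -/
theorem statement8 (ν M : ℝ) (hν : -1 ≤ ν) (hM : 0 < M) :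
    ∃ c : ℝ, 0 < c ∧ ∃ C : ℝ, 0 < C ∧
      ∀ V : ℝ → ℝ,
        (∀ t : ℝ, 0 < t → DifferentiableAt ℝ V t) →
        (∀ t : ℝ, 0 < t → DifferentiableAt ℝ (deriv V) t) →
        (∀ t : ℝ, 0 < t → 0 < deriv V t) →
        (∀ t : ℝ, 0 < t → |deriv (deriv V) t| ≤ M * t ^ ν * deriv V t) →
        ∀ xb : ℝ, 0 < xb → 1 ≤ xb ^ (1 + ν) →
          ∀ x : ℝ, 0 < x → |x - xb| ≤ xb ^ (-ν) / 2 →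
            c * deriv V xb * (x - xb) ^ 2 ≤ (∫ t in xb..x, (V t - V xb)) ∧
              (∫ t in xb..x, (V t - V xb)) ≤ C * deriv V xb * (x - xb) ^ 2 :=
  statement8_general ν M hM
end

section
/- Let s₁, s₂ ≥ 1, let j = (j₁,j₂), r = (r₁,r₂) ∈ ℕ₀², set s := (s₁,s₂), and let f : ℝ → ℂ be (s₁+1)-times differentiable and g : ℝ → ℂ be (s₂+1)-times differentiable. If u ∈ D_j^{r,s}(f,g), then there exist u₁ ∈ D_j^{r+(1,0),s+(1,0)}(f,g) and u₂ ∈ D_j^{r+(0,1),s+(0,1)}(f,g) such that u′ = u₁ + u₂. -/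
/-!
By the product rule, differentiating the factor `(φ⁽ᵠ⁾)^{a_q}` of a monomial in the derivatives
of `φ` yields `a_q (φ⁽ᵠ⁾)^{a_q-1} φ⁽ᵠ⁺¹⁾`: one unit of exponent moves from slot `q` to slot
`q + 1`. This preserves the number of factors `j` and raises the weight `r` by one, at the cost of
one more slot. Since `D_j^{r,s}(f,g)` is the `ℂ`-span of such monomials, the statement passes
from monomials to all of `D_j^{r,s}(f,g)` by linearity of the derivative.
-/

open scoped BigOperators

/-- The index set `𝓘_j^{r,s}` of multi-indices. -/
def Iset (j r s : ℕ × ℕ) : Set ((Fin s.1 → ℕ) × (Fin s.2 → ℕ)) :=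
  {α | (∑ p, α.1 p) = j.1 ∧ (∑ p, α.2 p) = j.2 ∧
    (∑ p : Fin s.1, (p.1 + 1) * α.1 p) = r.1 ∧
    (∑ p : Fin s.2, (p.1 + 1) * α.2 p) = r.2}

/-- The monomial `(f⁽¹⁾)^{α₁}⋯(f^{(s₁)})^{α_{s₁}}(g⁽¹⁾)^{α_{s₁+1}}⋯(g^{(s₂)})^{α_{s₁+s₂}}`. -/
noncomputable def Dmonomial (s : ℕ × ℕ) (f g : ℝ → ℂ)
    (α : (Fin s.1 → ℕ) × (Fin s.2 → ℕ)) : ℝ → ℂ :=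
  fun x => (∏ p : Fin s.1, (iteratedDeriv (p.1 + 1) f x) ^ α.1 p) *
    (∏ p : Fin s.2, (iteratedDeriv (p.1 + 1) g x) ^ α.2 p)

/-- The class `D_j^{r,s}(f,g)`. -/
noncomputable def Dset (j r s : ℕ × ℕ) (f g : ℝ → ℂ) : Set (ℝ → ℂ) :=
  {u | ∃ c : ((Fin s.1 → ℕ) × (Fin s.2 → ℕ)) → ℂ,
    (Function.support c).Finite ∧ (∀ α, c α ≠ 0 → α ∈ Iset j r s) ∧
    u = fun x => ∑ᶠ α, c α * Dmonomial s f g α x}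

open Finset

-- For `a q = 0` the truncated subtraction leaves `a` unchanged; such terms always carry the
-- coefficient `a q = 0`.
def shiftExp {n : ℕ} (a : Fin n → ℕ) (q : Fin n) : Fin (n + 1) → ℕ :=
  Fin.snoc (a - Pi.single q 1) 0 + Pi.single q.succ 1

lemma sum_mul_shiftExp {n : ℕ} (w : Fin (n + 1) → ℕ) {a : Fin n → ℕ} {q : Fin n}
    (h : 1 ≤ a q) :
    ∑ p, w p * shiftExp a q p + w q.castSucc = ∑ p, w p.castSucc * a p + w q.succ := by
  have hle : Pi.single q 1 ≤ a := fun p => by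
    rw [Pi.single_apply]
    split_ifs with hp
    · exact hp ▸ h
    · exact Nat.zero_le _
  conv_rhs => rw [← tsub_add_cancel_of_le hle]
  simp only [shiftExp, Pi.add_apply, mul_add, sum_add_distrib, Fin.sum_univ_castSucc,
    Fin.snoc_castSucc, Fin.snoc_last, Pi.single_apply, mul_ite, mul_one, mul_zero, add_zero,
    sum_ite_eq', mem_univ, if_true]
  omega

lemma prod_pow_shiftExp {M : Type*} [CommMonoid M] {n : ℕ} (H : Fin (n + 1) → M)
    (a : Fin n → ℕ) (q : Fin n) :
    ∏ p, H p ^ shiftExp a q p =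
      (∏ p ∈ univ.erase q, H p.castSucc ^ a p) * H q.castSucc ^ (a q - 1) * H q.succ := by
  have hsingle : ∏ p, H p ^ (Pi.single q.succ 1 : Fin (n + 1) → ℕ) p = H q.succ := by
    simp [Pi.single_apply, pow_ite]
  have hsnoc : ∏ p, H p ^ (Fin.snoc (a - Pi.single q 1) 0 : Fin (n + 1) → ℕ) p =
      ∏ p : Fin n, H p.castSucc ^ (a - Pi.single q 1 : Fin n → ℕ) p := by
    simp [Fin.prod_univ_castSucc]
  have herase : ∀ p ∈ univ.erase q, (a - Pi.single q 1 : Fin n → ℕ) p = a p := fun p hp => by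
    simp [Pi.single_eq_of_ne (ne_of_mem_erase hp)]
  rw [← prod_erase_mul univ _ (mem_univ q)] at hsnoc
  simp only [shiftExp, Pi.add_apply, pow_add, prod_mul_distrib, hsingle, hsnoc]
  congr 2
  · exact prod_congr rfl fun p hp => by rw [herase p hp]
  · simp

noncomputable def jetMonomial (n : ℕ) (φ : ℝ → ℂ) (a : Fin n → ℕ) : ℝ → ℂ :=
  fun x => ∏ p : Fin n, iteratedDeriv (p + 1) φ x ^ a p

lemma hasDerivAt_jetMonomial {n : ℕ} {φ : ℝ → ℂ} (hφ : ContDiff ℝ (n + 1) φ) (a : Fin n → ℕ)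
    (x : ℝ) :
    HasDerivAt (jetMonomial n φ a)
      (∑ q, (a q : ℂ) * jetMonomial (n + 1) φ (shiftExp a q) x) x := by
  have hfactor (p : Fin n) : HasDerivAt (fun y => iteratedDeriv (p + 1) φ y ^ a p)
      ((a p : ℂ) * iteratedDeriv (p + 1) φ x ^ (a p - 1) * iteratedDeriv (p + 2) φ x) x := by
    have hdiff := hφ.differentiable_iteratedDeriv (p + 1) (by exact_mod_cast Nat.succ_lt_succ p.2)
    have hstep := (hdiff x).hasDerivAt
    rw [← iteratedDeriv_succ] at hstep
    exact hstep.pow (a p)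
  refine (HasDerivAt.fun_finsetProd fun p _ => hfactor p).congr_deriv
    (sum_congr rfl fun q _ => ?_)
  rw [jetMonomial, prod_pow_shiftExp (fun p : Fin (n + 1) => iteratedDeriv (p + 1) φ x)]
  simp only [Fin.val_castSucc, Fin.val_succ, smul_eq_mul]
  ring

noncomputable def Dspan (j r s : ℕ × ℕ) (f g : ℝ → ℂ) : Submodule ℂ (ℝ → ℂ) :=
  Submodule.span ℂ (Dmonomial s f g '' Iset j r s)

lemma linearCombination_Dmonomial {s : ℕ × ℕ} (f g : ℝ → ℂ)
    (c : ((Fin s.1 → ℕ) × (Fin s.2 → ℕ)) →₀ ℂ) :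
    Finsupp.linearCombination ℂ (Dmonomial s f g) c =
      fun x => ∑ᶠ α, c α * Dmonomial s f g α x := by
  funext x
  rw [Finsupp.linearCombination_apply, Finsupp.sum, Finset.sum_apply,
    finsum_eq_sum_of_support_subset _ fun α hα =>
      Finsupp.mem_support_iff.2 (left_ne_zero_of_mul (Function.mem_support.1 hα))]
  rfl

lemma coe_Dspan (j r s : ℕ × ℕ) (f g : ℝ → ℂ) :
    (Dspan j r s f g : Set (ℝ → ℂ)) = Dset j r s f g := by
  ext u
  simp only [SetLike.mem_coe, Dspan, Finsupp.mem_span_image_iff_linearCombination,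
    linearCombination_Dmonomial, Finsupp.mem_supported]
  constructor
  · rintro ⟨c, hc, rfl⟩
    exact ⟨c, c.hasFiniteSupport, fun α hα => hc (Finsupp.mem_support_iff.2 hα), rfl⟩
  · rintro ⟨c, hfin, hc, rfl⟩
    exact ⟨Finsupp.ofSupportFinite c hfin, fun α hα => hc α (Finsupp.mem_support_iff.1 hα), rfl⟩


section

variable {j r s : ℕ × ℕ} {f g : ℝ → ℂ}

lemma shiftExp_fst_mem_Iset {α : (Fin s.1 → ℕ) × (Fin s.2 → ℕ)} (hα : α ∈ Iset j r s)
    {q : Fin s.1} (h : 1 ≤ α.1 q) :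
    (shiftExp α.1 q, α.2) ∈ Iset j (r + (1, 0)) (s.1 + 1, s.2) := by
  obtain ⟨hj₁, hj₂, hr₁, hr₂⟩ := hα
  have hcount := sum_mul_shiftExp (fun _ => 1) h
  have hweight := sum_mul_shiftExp (fun p => p.1 + 1) h
  simp only [one_mul, Fin.val_castSucc, Fin.val_succ] at hcount hweight
  simp only [Iset, Set.mem_ofPred_eq, Prod.fst_add, Prod.snd_add, add_zero]
  exact ⟨by omega, hj₂, by omega, hr₂⟩

lemma shiftExp_snd_mem_Iset {α : (Fin s.1 → ℕ) × (Fin s.2 → ℕ)} (hα : α ∈ Iset j r s)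
    {q : Fin s.2} (h : 1 ≤ α.2 q) :
    (α.1, shiftExp α.2 q) ∈ Iset j (r + (0, 1)) (s.1, s.2 + 1) := by
  obtain ⟨hj₁, hj₂, hr₁, hr₂⟩ := hα
  have hcount := sum_mul_shiftExp (fun _ => 1) h
  have hweight := sum_mul_shiftExp (fun p => p.1 + 1) h
  simp only [one_mul, Fin.val_castSucc, Fin.val_succ] at hcount hweight
  simp only [Iset, Set.mem_ofPred_eq, Prod.fst_add, Prod.snd_add, add_zero]
  exact ⟨hj₁, by omega, hr₁, by omega⟩

lemma hasDerivAt_Dmonomial (hf : ContDiff ℝ (s.1 + 1) f) (hg : ContDiff ℝ (s.2 + 1) g)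
    (α : (Fin s.1 → ℕ) × (Fin s.2 → ℕ)) (x : ℝ) :
    HasDerivAt (Dmonomial s f g α)
      ((∑ q, (α.1 q : ℂ) • Dmonomial (s + (1, 0)) f g (shiftExp α.1 q, α.2)) x +
        (∑ q, (α.2 q : ℂ) • Dmonomial (s + (0, 1)) f g (α.1, shiftExp α.2 q)) x) x := by
  refine ((hasDerivAt_jetMonomial hf α.1 x).mul (hasDerivAt_jetMonomial hg α.2 x)).congr_deriv ?_
  simp only [Finset.sum_apply, Pi.smul_apply, smul_eq_mul, sum_mul, mul_sum]
  congr 1 <;> refine sum_congr rfl fun q _ => ?_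
  · change _ = (α.1 q : ℂ) * (jetMonomial (s.1 + 1) f (shiftExp α.1 q) x * jetMonomial s.2 g α.2 x)
    ring
  · change _ = (α.2 q : ℂ) * (jetMonomial s.1 f α.1 x * jetMonomial (s.2 + 1) g (shiftExp α.2 q) x)
    ring

lemma sum_smul_Dmonomial_shiftExp_fst_mem {α : (Fin s.1 → ℕ) × (Fin s.2 → ℕ)}
    (hα : α ∈ Iset j r s) :
    ∑ q, (α.1 q : ℂ) • Dmonomial (s + (1, 0)) f g (shiftExp α.1 q, α.2) ∈
      Dspan j (r + (1, 0)) (s + (1, 0)) f g :=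
  Submodule.sum_mem _ fun q _ => by
    rcases Nat.eq_zero_or_pos (α.1 q) with h | h
    · simp [h]
    · exact Submodule.smul_mem _ _ (Submodule.subset_span ⟨_, shiftExp_fst_mem_Iset hα h, rfl⟩)

lemma sum_smul_Dmonomial_shiftExp_snd_mem {α : (Fin s.1 → ℕ) × (Fin s.2 → ℕ)}
    (hα : α ∈ Iset j r s) :
    ∑ q, (α.2 q : ℂ) • Dmonomial (s + (0, 1)) f g (α.1, shiftExp α.2 q) ∈
      Dspan j (r + (0, 1)) (s + (0, 1)) f g :=
  Submodule.sum_mem _ fun q _ => by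
    rcases Nat.eq_zero_or_pos (α.2 q) with h | h
    · simp [h]
    · exact Submodule.smul_mem _ _ (Submodule.subset_span ⟨_, shiftExp_snd_mem_Iset hα h, rfl⟩)

theorem exists_hasDerivAt_of_mem_Dspan (hf : ContDiff ℝ (s.1 + 1) f)
    (hg : ContDiff ℝ (s.2 + 1) g) {u : ℝ → ℂ} (hu : u ∈ Dspan j r s f g) :
    ∃ u₁ ∈ Dspan j (r + (1, 0)) (s + (1, 0)) f g, ∃ u₂ ∈ Dspan j (r + (0, 1)) (s + (0, 1)) f g,
      ∀ x, HasDerivAt u (u₁ x + u₂ x) x := by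
  induction hu using Submodule.span_induction with
  | mem u hu =>
    obtain ⟨α, hα, rfl⟩ := hu
    exact ⟨_, sum_smul_Dmonomial_shiftExp_fst_mem hα, _, sum_smul_Dmonomial_shiftExp_snd_mem hα,
      hasDerivAt_Dmonomial hf hg α⟩
  | zero => exact ⟨0, zero_mem _, 0, zero_mem _, fun x => by simp⟩
  | add u v _ _ hu hv =>
    obtain ⟨u₁, hu₁, u₂, hu₂, hu⟩ := hu
    obtain ⟨v₁, hv₁, v₂, hv₂, hv⟩ := hv
    refine ⟨u₁ + v₁, add_mem hu₁ hv₁, u₂ + v₂, add_mem hu₂ hv₂, fun x =>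
      ((hu x).add (hv x)).congr_deriv ?_⟩
    simp only [Pi.add_apply]
    ring
  | smul c u _ hu =>
    obtain ⟨u₁, hu₁, u₂, hu₂, hu⟩ := hu
    exact ⟨c • u₁, Submodule.smul_mem _ c hu₁, c • u₂, Submodule.smul_mem _ c hu₂, fun x =>
      ((hu x).const_smul c).congr_deriv (smul_add c _ _)⟩

end

theorem statement10_general (s₁ s₂ : ℕ) (j r : ℕ × ℕ)
    (f g : ℝ → ℂ) (hf : ContDiff ℝ (s₁ + 1) f) (hg : ContDiff ℝ (s₂ + 1) g)
    (u : ℝ → ℂ) (hu : u ∈ Dset j r (s₁, s₂) f g) :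
    ∃ u₁ ∈ Dset j (r + (1, 0)) ((s₁, s₂) + (1, 0)) f g,
      ∃ u₂ ∈ Dset j (r + (0, 1)) ((s₁, s₂) + (0, 1)) f g,
        deriv u = u₁ + u₂ := by
  rw [← coe_Dspan] at hu
  obtain ⟨u₁, hu₁, u₂, hu₂, hderiv⟩ := exists_hasDerivAt_of_mem_Dspan hf hg hu
  refine ⟨u₁, ?_, u₂, ?_, funext fun x => (hderiv x).deriv⟩
  · rwa [← coe_Dspan]
  · rwa [← coe_Dspan]

/-- If `u ∈ D_j^{r,s}(f,g)`, with `f` being `(s₁+1)`-times and `g` being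
`(s₂+1)`-times differentiable, then `u′ = u₁ + u₂` with
`u₁ ∈ D_j^{r+(1,0),s+(1,0)}(f,g)` and `u₂ ∈ D_j^{r+(0,1),s+(0,1)}(f,g)`. -/
theorem statement10 (s₁ s₂ : ℕ) (hs₁ : 1 ≤ s₁) (hs₂ : 1 ≤ s₂) (j r : ℕ × ℕ)
    (f g : ℝ → ℂ) (hf : ContDiff ℝ (s₁ + 1) f) (hg : ContDiff ℝ (s₂ + 1) g)
    (u : ℝ → ℂ) (hu : u ∈ Dset j r (s₁, s₂) f g) :
    ∃ u₁ ∈ Dset j (r + (1, 0)) ((s₁, s₂) + (1, 0)) f g,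
      ∃ u₂ ∈ Dset j (r + (0, 1)) ((s₁, s₂) + (0, 1)) f g,
        deriv u = u₁ + u₂ :=
  statement10_general s₁ s₂ j r f g hf hg u hu
end

section
/- Let λ > 0, m ≥ 0 and 0 < η < μ ≤ 1, and let a, b ∈ ℂ satisfy |Re a + m| ≤ ηλ, |Re b − m| ≤ ηλ, |Im a − Im b| ≤ ηλ, and Im a + Im b ≥ μ(|Im a| + |Im b|). Set V_λ := (λ−m−a)(λ+m−b); then V_λ ∉ (−∞,0], and Re(i V_λ^{1/2}) ≥ ((μ−η)/√(η²+(2+2η)²)) (Im a + Im b). Moreover, |Re(i V_λ^{1/2})| ≤ ½ √((1+η)/(1−η)) (|Im a| + |Im b|). -/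
/-!
Replacing `a, b` by `a + m, b - m` turns `V_λ` into `(λ - a)(λ - b)`, so `m = 0` may be assumed.
Let `α = λ - Re a`, `β = λ - Re b`, both in `[(1-η)λ, (1+η)λ]`, and `N = α Im b + β Im a = -Im V`.
The formula for `psqrt` gives `Re(i √V) = N / √(2(|V| + Re V))`, whose square is `(|V| - Re V)/2`.
Since `|V| = |(λ - a) conj(λ - b)| ≥ αβ + Im a Im b`, we have `|V| + Re V ≥ 2αβ > 0`: `V` is off
`(-∞, 0]`, and `Re(i √V)² ≤ N² / (4αβ)`, which `α/β, β/α ≤ (1+η)/(1-η)` turns into the upper bound.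
For the lower bound, `N ≥ λ(μ-η)(Im a + Im b)`; with `E = η² + (2+2η)²` and
`c = (μ-η)(Im a + Im b)/√E`, the estimates `Re V + c² ≤ λ²E/4` and `c²λ²E ≤ N²` give
`(Re V + 2c²)² ≤ (Re V)² + N² = |V|²`, i.e. `Re(i √V)² ≥ c²`.
-/

/-- The principal branch of the complex square root, for `z ∉ (−∞,0]`:
`√z = 2^{−1/2}(|z|+Re z)^{1/2} + i·2^{−1/2}·Im z·(|z|+Re z)^{−1/2}`. -/
noncomputable def psqrt (z : ℂ) : ℂ :=
  (Real.sqrt (‖z‖ + z.re) / Real.sqrt 2 : ℝ) +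
    Complex.I * ((z.im / (Real.sqrt 2 * Real.sqrt (‖z‖ + z.re)) : ℝ) : ℂ)

open Complex ComplexConjugate

theorem re_I_mul_psqrt (z : ℂ) :
    (I * psqrt z).re = -z.im / (√2 * √(‖z‖ + z.re)) := by
  simp only [psqrt, add_im, mul_im, mul_re, I_re, I_im, ofReal_re, ofReal_im]
  ring

theorem re_I_mul_psqrt_sq {z : ℂ} (hz : 0 < ‖z‖ + z.re) :
    (I * psqrt z).re ^ 2 = (‖z‖ - z.re) / 2 := by
  rw [re_I_mul_psqrt, div_pow, neg_sq, mul_pow, Real.sq_sqrt zero_le_two, Real.sq_sqrt hz.le,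
    div_eq_div_iff (by positivity) two_ne_zero, ← sq_norm_sub_sq_re]
  ring

theorem re_I_mul_psqrt_nonneg {z : ℂ} (hz : z.im ≤ 0) : 0 ≤ (I * psqrt z).re := by
  rw [re_I_mul_psqrt]
  exact div_nonneg (neg_nonneg.mpr hz) (by positivity)

theorem Complex.not_im_eq_zero_and_re_nonpos {z : ℂ} (hz : 0 < ‖z‖ + z.re) :
    ¬(z.im = 0 ∧ z.re ≤ 0) := by
  rintro ⟨him, hre⟩
  rw [← abs_re_eq_norm.mpr him, abs_of_nonpos hre] at hz
  linarith

theorem Complex.two_mul_re_mul_re_le_norm_mul_add_re (w₁ w₂ : ℂ) :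
    2 * (w₁.re * w₂.re) ≤ ‖w₁ * w₂‖ + (w₁ * w₂).re := by
  have h := re_le_norm (w₁ * conj w₂)
  rw [norm_mul, norm_conj, ← norm_mul] at h
  simp only [mul_re, conj_re, conj_im] at h ⊢
  linarith

theorem Complex.re_add_two_mul_le_norm {z : ℂ} {t K : ℝ} (ht : 0 ≤ t) (hK : z.re + t ≤ K)
    (him : 4 * t * K ≤ z.im ^ 2) : z.re + 2 * t ≤ ‖z‖ := by
  refine le_of_sq_le_sq ?_ (norm_nonneg z)
  have := mul_le_mul_of_nonneg_left hK (by positivity : 0 ≤ 4 * t)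
  nlinarith [sq_norm_sub_sq_re z]

theorem le_re_I_mul_psqrt {z : ℂ} {c K : ℝ} (him₀ : z.im ≤ 0) (hz : 0 < ‖z‖ + z.re)
    (hK : z.re + c ^ 2 ≤ K) (him : 4 * c ^ 2 * K ≤ z.im ^ 2) : c ≤ (I * psqrt z).re := by
  refine le_of_sq_le_sq ?_ (re_I_mul_psqrt_nonneg him₀)
  have := re_add_two_mul_le_norm (sq_nonneg c) hK him
  rw [re_I_mul_psqrt_sq hz]
  linarith

theorem abs_re_I_mul_psqrt_mul_le {w₁ w₂ : ℂ} {B : ℝ} (hw : 0 < w₁.re * w₂.re) (hB : 0 ≤ B)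
    (h : (w₁ * w₂).im ^ 2 ≤ 4 * (w₁.re * w₂.re) * B ^ 2) :
    |(I * psqrt (w₁ * w₂)).re| ≤ B := by
  set z := w₁ * w₂
  have hpos := two_mul_re_mul_re_le_norm_mul_add_re w₁ w₂
  have hρ := re_I_mul_psqrt_sq (z := z) (by linarith)
  refine abs_le_of_sq_le_sq ?_ hB
  have : 4 * (w₁.re * w₂.re) * (I * psqrt z).re ^ 2 ≤ z.im ^ 2 := by
    rw [hρ, ← sq_norm_sub_sq_re]
    nlinarith [re_le_norm z]
  nlinarith

theorem mul_add_sub_mul_abs_add_abs_le {L δ α β u v : ℝ} (hα : |α - L| ≤ δ) (hβ : |β - L| ≤ δ) :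
    L * (u + v) - δ * (|u| + |v|) ≤ α * v + β * u := by
  have hαv := (abs_mul (α - L) v ▸ neg_abs_le ((α - L) * v))
  have hβu := (abs_mul (β - L) u ▸ neg_abs_le ((β - L) * u))
  nlinarith [mul_le_mul_of_nonneg_right hα (abs_nonneg v),
    mul_le_mul_of_nonneg_right hβ (abs_nonneg u)]

theorem mul_sub_mul_add_le_mul_add_mul {L η μ α β u v : ℝ} (hL : 0 ≤ L) (hη : 0 ≤ η) (hημ : η < μ)
    (hμ : μ ≤ 1) (hα : |α - L| ≤ η * L) (hβ : |β - L| ≤ η * L) (huv : μ * (|u| + |v|) ≤ u + v) :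
    L * (μ - η) * (u + v) ≤ α * v + β * u := by
  have h := mul_add_sub_mul_abs_add_abs_le (u := u) (v := v) hα hβ
  have hs : 0 ≤ u + v := (mul_nonneg (by linarith) (by positivity)).trans huv
  have hμN : L * (μ - η) * (u + v) ≤ μ * (α * v + β * u) := by
    nlinarith [mul_le_mul_of_nonneg_left huv (by positivity : 0 ≤ η * L),
      mul_le_mul_of_nonneg_left h (by linarith : 0 ≤ μ)]
  have hN : 0 ≤ α * v + β * u :=
    nonneg_of_mul_nonneg_right ((by positivity : 0 ≤ L * (μ - η) * (u + v)).trans hμN)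
      (by linarith)
  nlinarith

theorem le_div_mul_of_abs_sub_le {L η α β : ℝ} (hη : 0 ≤ η) (hη1 : η < 1)
    (hα : |α - L| ≤ η * L) (hβ : |β - L| ≤ η * L) : α ≤ (1 + η) / (1 - η) * β := by
  rw [div_mul_eq_mul_div, le_div_iff₀ (by linarith)]
  nlinarith [abs_le.mp hα, abs_le.mp hβ]

theorem sq_mul_add_mul_le {r α β u v : ℝ} (hα : 0 ≤ α) (hβ : 0 ≤ β) (hr : 1 ≤ r)
    (hαβ : α ≤ r * β) (hβα : β ≤ r * α) :
    (α * v + β * u) ^ 2 ≤ r * (α * β) * (|u| + |v|) ^ 2 := by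
  have h : |α * v + β * u| ≤ α * |v| + β * |u| := by
    simpa [abs_mul, abs_of_nonneg hα, abs_of_nonneg hβ] using abs_add_le (α * v) (β * u)
  have hsq := sq_le_sq.mpr (h.trans (le_abs_self _))
  nlinarith [mul_le_mul_of_nonneg_left hαβ (mul_nonneg hα (sq_nonneg |v|)),
    mul_le_mul_of_nonneg_left hβα (mul_nonneg hβ (sq_nonneg |u|)),
    mul_le_mul_of_nonneg_right hr
      (mul_nonneg (mul_nonneg hα hβ) (mul_nonneg (abs_nonneg u) (abs_nonneg v)))]

section ShiftedProduct

variable {lam η μ : ℝ} {a b : ℂ}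

theorem re_ofReal_sub_pos (hlam : 0 < lam) (hη1 : η < 1) (ha : |a.re| ≤ η * lam) :
    0 < ((lam : ℂ) - a).re := by
  rw [sub_re, ofReal_re]
  nlinarith [abs_le.mp ha]

theorem norm_sub_mul_sub_add_re_pos (hlam : 0 < lam) (hη1 : η < 1) (ha : |a.re| ≤ η * lam)
    (hb : |b.re| ≤ η * lam) :
    0 < ‖((lam : ℂ) - a) * (lam - b)‖ + (((lam : ℂ) - a) * (lam - b)).re := by
  have := mul_pos (re_ofReal_sub_pos hlam hη1 ha) (re_ofReal_sub_pos hlam hη1 hb)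
  linarith [two_mul_re_mul_re_le_norm_mul_add_re ((lam : ℂ) - a) (lam - b)]

theorem le_re_I_mul_psqrt_sub_mul_sub (hlam : 0 < lam) (hη : 0 ≤ η) (hημ : η < μ) (hμ : μ ≤ 1)
    (ha : |a.re| ≤ η * lam) (hb : |b.re| ≤ η * lam) (hab : |a.im - b.im| ≤ η * lam)
    (habμ : μ * (|a.im| + |b.im|) ≤ a.im + b.im) :
    (μ - η) / √(η ^ 2 + (2 + 2 * η) ^ 2) * (a.im + b.im) ≤
      (I * psqrt (((lam : ℂ) - a) * (lam - b))).re := by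
  set E := η ^ 2 + (2 + 2 * η) ^ 2
  have hη1 : η < 1 := hημ.trans_le hμ
  have hE : 4 ≤ E := by nlinarith
  have hN := mul_sub_mul_add_le_mul_add_mul (α := lam - a.re) (β := lam - b.re) hlam.le hη hημ hμ
    (by rwa [sub_sub_cancel_left, abs_neg]) (by rwa [sub_sub_cancel_left, abs_neg]) habμ
  have hs : 0 ≤ a.im + b.im := (mul_nonneg (by linarith) (by positivity)).trans habμ
  have hsq : ((μ - η) / √E * (a.im + b.im)) ^ 2 = (μ - η) ^ 2 / E * (a.im + b.im) ^ 2 := by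
    rw [mul_pow, div_pow, Real.sq_sqrt (by linarith)]
  apply le_re_I_mul_psqrt (K := lam ^ 2 * E / 4)
  · simp only [mul_im, sub_re, sub_im, ofReal_re, ofReal_im]
    nlinarith [mul_nonneg (mul_nonneg hlam.le (sub_nonneg.mpr hημ.le)) hs]
  · exact norm_sub_mul_sub_add_re_pos hlam hη1 ha hb
  · -- the weight `(μ - η)² / E` is at most `1/4`, and `-uv + (u + v)²/4 = (u - v)²/4`
    have hc : (μ - η) ^ 2 / E ≤ 1 / 4 := by
      rw [div_le_iff₀ (by linarith)]; nlinarith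
    rw [hsq]
    simp only [mul_re, sub_re, sub_im, ofReal_re, ofReal_im]
    have := abs_le.mp ha
    have := abs_le.mp hb
    have := abs_le.mp hab
    nlinarith [mul_le_mul_of_nonneg_right hc (sq_nonneg (a.im + b.im))]
  · have h4 : 4 * ((μ - η) ^ 2 / E * (a.im + b.im) ^ 2) * (lam ^ 2 * E / 4) =
        (lam * (μ - η) * (a.im + b.im)) ^ 2 := by
      field_simp
    rw [hsq, h4]
    simp only [mul_im, sub_re, sub_im, ofReal_re, ofReal_im]
    nlinarith [mul_nonneg (mul_nonneg hlam.le (sub_nonneg.mpr hημ.le)) hs]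

theorem abs_re_I_mul_psqrt_sub_mul_sub_le (hlam : 0 < lam) (hη : 0 ≤ η) (hη1 : η < 1)
    (ha : |a.re| ≤ η * lam) (hb : |b.re| ≤ η * lam) :
    |(I * psqrt (((lam : ℂ) - a) * (lam - b))).re| ≤
      1 / 2 * √((1 + η) / (1 - η)) * (|a.im| + |b.im|) := by
  have hα := re_ofReal_sub_pos hlam hη1 ha
  have hβ := re_ofReal_sub_pos hlam hη1 hb
  have hr : 1 ≤ (1 + η) / (1 - η) := by rw [le_div_iff₀ (by linarith)]; linarith
  have hα' : |((lam : ℂ) - a).re - lam| ≤ η * lam := by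
    rwa [sub_re, ofReal_re, sub_sub_cancel_left, abs_neg]
  have hβ' : |((lam : ℂ) - b).re - lam| ≤ η * lam := by
    rwa [sub_re, ofReal_re, sub_sub_cancel_left, abs_neg]
  have h := sq_mul_add_mul_le (u := a.im) (v := b.im) hα.le hβ.le hr
    (le_div_mul_of_abs_sub_le hη hη1 hα' hβ') (le_div_mul_of_abs_sub_le hη hη1 hβ' hα')
  refine abs_re_I_mul_psqrt_mul_le (mul_pos hα hβ) (by positivity) ?_
  rw [mul_pow, mul_pow, Real.sq_sqrt (zero_le_one.trans hr)]
  simp only [mul_im, sub_im, ofReal_im, zero_sub] at h ⊢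
  linear_combination h

end ShiftedProduct

theorem statement15_general (lam m η μ : ℝ) (hlam : 0 < lam)
    (hη : 0 < η) (hημ : η < μ) (hμ : μ ≤ 1) (a b : ℂ)
    (ha : |a.re + m| ≤ η * lam) (hb : |b.re - m| ≤ η * lam)
    (hab : |a.im - b.im| ≤ η * lam)
    (habμ : μ * (|a.im| + |b.im|) ≤ a.im + b.im) :
    (¬((((lam : ℂ) - (m : ℂ) - a) * ((lam : ℂ) + (m : ℂ) - b)).im = 0 ∧
        (((lam : ℂ) - (m : ℂ) - a) * ((lam : ℂ) + (m : ℂ) - b)).re ≤ 0)) ∧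
      ((μ - η) / Real.sqrt (η ^ 2 + (2 + 2 * η) ^ 2)) * (a.im + b.im) ≤
        (Complex.I * psqrt (((lam : ℂ) - (m : ℂ) - a) * ((lam : ℂ) + (m : ℂ) - b))).re ∧
      |(Complex.I * psqrt (((lam : ℂ) - (m : ℂ) - a) * ((lam : ℂ) + (m : ℂ) - b))).re| ≤
        (1 / 2) * Real.sqrt ((1 + η) / (1 - η)) * (|a.im| + |b.im|) := by
  have hη1 : η < 1 := hημ.trans_le hμ
  have hV : ((lam : ℂ) - m - a) * (lam + m - b) = (lam - (a + m)) * (lam - (b - m)) := by ring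
  have him : (a + m).im = a.im ∧ (b - m).im = b.im := by simp
  have ha' : |(a + m).re| ≤ η * lam := by rwa [add_re, ofReal_re]
  have hb' : |(b - m).re| ≤ η * lam := by rwa [sub_re, ofReal_re]
  have hab' : |(a + m).im - (b - m).im| ≤ η * lam := by rwa [him.1, him.2]
  have habμ' : μ * (|(a + m).im| + |(b - m).im|) ≤ (a + m).im + (b - m).im := by
    rwa [him.1, him.2]
  rw [hV]
  refine ⟨not_im_eq_zero_and_re_nonpos (norm_sub_mul_sub_add_re_pos hlam hη1 ha' hb'), ?_, ?_⟩
  · simpa only [him] using le_re_I_mul_psqrt_sub_mul_sub hlam hη.le hημ hμ ha' hb' hab' habμ'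
  · simpa only [him] using abs_re_I_mul_psqrt_sub_mul_sub_le hlam hη.le hη1 ha' hb'

/-- Let `λ > 0`, `m ≥ 0`, `0 < η < μ ≤ 1` and `a, b ∈ ℂ` with
`|Re a + m| ≤ ηλ`, `|Re b − m| ≤ ηλ`, `|Im a − Im b| ≤ ηλ` and
`Im a + Im b ≥ μ(|Im a|+|Im b|)`. With `V_λ := (λ−m−a)(λ+m−b)` one has `V_λ ∉ (−∞,0]`,
`Re(i V_λ^{1/2}) ≥ ((μ−η)/√(η²+(2+2η)²))(Im a + Im b)`, and
`|Re(i V_λ^{1/2})| ≤ ½√((1+η)/(1−η))(|Im a|+|Im b|)`. -/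
theorem statement15 (lam m η μ : ℝ) (hlam : 0 < lam) (hm : 0 ≤ m)
    (hη : 0 < η) (hημ : η < μ) (hμ : μ ≤ 1) (a b : ℂ)
    (ha : |a.re + m| ≤ η * lam) (hb : |b.re - m| ≤ η * lam)
    (hab : |a.im - b.im| ≤ η * lam)
    (habμ : μ * (|a.im| + |b.im|) ≤ a.im + b.im) :
    (¬((((lam : ℂ) - (m : ℂ) - a) * ((lam : ℂ) + (m : ℂ) - b)).im = 0 ∧
        (((lam : ℂ) - (m : ℂ) - a) * ((lam : ℂ) + (m : ℂ) - b)).re ≤ 0)) ∧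
      ((μ - η) / Real.sqrt (η ^ 2 + (2 + 2 * η) ^ 2)) * (a.im + b.im) ≤
        (Complex.I * psqrt (((lam : ℂ) - (m : ℂ) - a) * ((lam : ℂ) + (m : ℂ) - b))).re ∧
      |(Complex.I * psqrt (((lam : ℂ) - (m : ℂ) - a) * ((lam : ℂ) + (m : ℂ) - b))).re| ≤
        (1 / 2) * Real.sqrt ((1 + η) / (1 - η)) * (|a.im| + |b.im|) :=
  statement15_general lam m η μ hlam hη hημ hμ a b ha hb hab habμ
end
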